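/- Let 0 < q < 1, b < 1/q, and z₁, z₂ nonzero complex numbers with z₁z₂ ≠ 0. Then the limit as m, n → ∞ of p_{m,n}(z₁, z₂; b | q) / ((bq;q)_∞ z₁^m z₂^n) equals (1/(z₁z₂); q)_∞, where (a;q)_∞ = ∏_{j=0}^{∞}(1 - a q^j). -/

import Mathlib

/-
Dividing by `(bq;q)_∞ z₁^m z₂^n` writes `p_{m,n}` as
`∑ₖ [m k]_q [n k]_q (q;q)_k ((bq;q)_{m+n-k} / (bq;q)_∞) (-1)^k q^(k(k-1)/2) w^k` with `w = 1/(z₁z₂)`.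
As `m, n → ∞` each q-binomial coefficient tends to `1/(q;q)_k` and the Pochhammer ratio to `1`,
and all these factors stay bounded uniformly in `m, n, k`, so Tannery's theorem (dominating series
`∑ₖ |q|^(k(k-1)/2) |w|^k`) gives the limit `∑ₖ (-1)^k q^(k(k-1)/2) w^k / (q;q)_k`. This is Euler's
expansion of `(w;q)_∞`, obtained in the same way as the limit `N → ∞` of the finite q-binomial
theorem `(x;q)_N = ∑ₖ [N k]_q (-1)^k q^(k(k-1)/2) x^k`.
-/

open Finset Filter

noncomputable def qPoch (a q : ℂ) (n : ℕ) : ℂ :=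
  ∏ j ∈ Finset.range n, (1 - a * q ^ j)

noncomputable def qbinom (q : ℂ) : ℕ → ℕ → ℂ
  | _, 0 => 1
  | 0, _ + 1 => 0
  | m + 1, k + 1 => qbinom q m k + q ^ (k + 1) * qbinom q m (k + 1)

/-- The first q-analogue of the 2D Hermite polynomials. -/
noncomputable def H2D (q z1 z2 : ℂ) (m n : ℕ) : ℂ :=
  ∑ k ∈ Finset.range (min m n + 1),
    qbinom q m k * qbinom q n k * (-1) ^ k * q ^ (k.choose 2) * qPoch q q k *
      z1 ^ (m - k) * z2 ^ (n - k)

/-- The second q-analogue of the 2D Hermite polynomials. -/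
noncomputable def h2D (q z1 z2 : ℂ) (m n : ℕ) : ℂ :=
  ∑ j ∈ Finset.range (min m n + 1),
    qbinom q m j * qbinom q n j * q ^ ((m - j) * (n - j)) * (-1) ^ j * qPoch q q j *
      z1 ^ (m - j) * z2 ^ (n - j)

/-- The q-2D ultraspherical (q-disk / q-Zernike) polynomials. -/
noncomputable def p2D (q b z1 z2 : ℂ) (m n : ℕ) : ℂ :=
  ∑ k ∈ Finset.range (min m n + 1),
    qbinom q m k * qbinom q n k * (-1) ^ k * q ^ (k.choose 2) * qPoch q q k *
      qPoch (b * q) q (m + n - k) * z1 ^ (m - k) * z2 ^ (n - k)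

/-- The infinite q-Pochhammer product (a;q)_∞. -/
noncomputable def qPochInf (a q : ℂ) : ℂ :=
  ∏' j : ℕ, (1 - a * q ^ j)

open Topology

lemma choose_two_succ (k : ℕ) : (k + 1).choose 2 = k.choose 2 + k := by
  rw [Nat.choose_succ_succ', Nat.choose_one_right, add_comm]

section Algebra

variable (q : ℂ)

lemma qPoch_zero (a : ℂ) : qPoch a q 0 = 1 := prod_range_zero _

lemma qPoch_succ (a : ℂ) (n : ℕ) : qPoch a q (n + 1) = qPoch a q n * (1 - a * q ^ n) :=
  prod_range_succ _ n

lemma qPoch_succ' (a : ℂ) (n : ℕ) : qPoch a q (n + 1) = (1 - a) * qPoch (a * q) q n := by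
  rw [qPoch, prod_range_succ', pow_zero, mul_one, mul_comm]
  exact congrArg _ (prod_congr rfl fun j _ => by ring)

@[simp]
lemma qbinom_zero_right (m : ℕ) : qbinom q m 0 = 1 := by cases m <;> rfl

lemma qbinom_succ_succ (m k : ℕ) :
    qbinom q (m + 1) (k + 1) = qbinom q m k + q ^ (k + 1) * qbinom q m (k + 1) := rfl

lemma qbinom_eq_zero_of_lt : ∀ {m k : ℕ}, m < k → qbinom q m k = 0
  | 0, _ + 1, _ => rfl
  | m + 1, k + 1, h => by
    rw [qbinom_succ_succ, qbinom_eq_zero_of_lt (by omega), qbinom_eq_zero_of_lt (by omega)]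
    ring

lemma qbinom_self : ∀ m : ℕ, qbinom q m m = 1
  | 0 => rfl
  | m + 1 => by rw [qbinom_succ_succ, qbinom_self m, qbinom_eq_zero_of_lt q (by omega)]; ring

lemma qbinom_add_mul_qPoch_mul_qPoch : ∀ k l : ℕ,
    qbinom q (k + l) k * qPoch q q k * qPoch q q l = qPoch q q (k + l)
  | 0, l => by simp [qPoch_zero]
  | k + 1, 0 => by simp [qbinom_self, qPoch_zero]
  | k + 1, l + 1 => by
    have h1 := qbinom_add_mul_qPoch_mul_qPoch k (l + 1)
    have h2 := qbinom_add_mul_qPoch_mul_qPoch (k + 1) l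
    rw [← add_assoc, qPoch_succ q q l] at h1
    rw [add_right_comm, qPoch_succ q q k] at h2
    rw [show k + 1 + (l + 1) = k + l + 1 + 1 by omega, qbinom_succ_succ, qPoch_succ q q (k + l + 1),
      qPoch_succ q q k, qPoch_succ q q l]
    linear_combination (1 - q * q ^ k) * h1 + q ^ (k + 1) * (1 - q * q ^ l) * h2

theorem qPoch_eq_sum_qbinom (x : ℂ) (N : ℕ) :
    qPoch x q N = ∑ k ∈ range (N + 1), qbinom q N k * ((-1) ^ k * q ^ k.choose 2 * x ^ k) := by
  induction N generalizing x with
  | zero => simp [qPoch_zero]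
  | succ N ih =>
    have hshift : ∑ k ∈ range (N + 1),
        qbinom q N (k + 1) * ((-1) ^ (k + 1) * q ^ (k + 1).choose 2 * (x * q) ^ (k + 1)) =
          qPoch (x * q) q N - 1 := by
      rw [ih, sum_range_succ, qbinom_eq_zero_of_lt q (by omega : N < N + 1), sum_range_succ' _ N]
      simp
    have hsplit : ∑ k ∈ range (N + 1),
        qbinom q (N + 1) (k + 1) * ((-1) ^ (k + 1) * q ^ (k + 1).choose 2 * x ^ (k + 1)) =
          -x * qPoch (x * q) q N + (qPoch (x * q) q N - 1) := by
      rw [← hshift, ih, mul_sum, ← sum_add_distrib]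
      refine sum_congr rfl fun k _ => ?_
      rw [qbinom_succ_succ, choose_two_succ]
      ring
    rw [qPoch_succ', sum_range_succ', hsplit]
    simp only [neg_mul, qbinom_zero_right, pow_zero, Nat.choose_zero_succ, mul_one]
    ring

lemma tsum_qbinom_mul (N : ℕ) (t : ℕ → ℂ) :
    ∑' k, qbinom q N k * t k = ∑ k ∈ range (N + 1), qbinom q N k * t k :=
  tsum_eq_sum fun k hk => by rw [qbinom_eq_zero_of_lt q (by simpa using hk), zero_mul]

end Algebra

lemma exists_norm_le_of_tendsto {E : Type*} [SeminormedAddCommGroup E] {u : ℕ → E} {x : E}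
    (hu : Tendsto u atTop (𝓝 x)) : ∃ C, ∀ n, ‖u n‖ ≤ C := by
  obtain ⟨C, hC⟩ := (Metric.isBounded_range_of_tendsto u hu).exists_norm_le
  exact ⟨C, fun n => hC _ (Set.mem_range_self n)⟩

lemma summable_pow_choose_two_mul_pow {ρ : ℝ} (hρ0 : 0 ≤ ρ) (hρ1 : ρ < 1) (r : ℝ) :
    Summable fun k : ℕ => ρ ^ k.choose 2 * r ^ k := by
  refine summable_of_ratio_norm_eventually_le one_half_lt_one ?_
  have h0 : Tendsto (fun k : ℕ => ρ ^ k * |r|) atTop (𝓝 0) := by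
    simpa using (tendsto_pow_atTop_nhds_zero_of_lt_one hρ0 hρ1).mul_const |r|
  filter_upwards [h0.eventually (eventually_le_nhds one_half_pos)] with k hk
  calc ‖ρ ^ (k + 1).choose 2 * r ^ (k + 1)‖ = ρ ^ k * |r| * ‖ρ ^ k.choose 2 * r ^ k‖ := by
        simp only [choose_two_succ, Real.norm_eq_abs, abs_mul, abs_pow, abs_of_nonneg hρ0]
        ring
    _ ≤ 1 / 2 * ‖ρ ^ k.choose 2 * r ^ k‖ := by gcongr

lemma norm_neg_one_pow_mul_pow_choose_two_mul_pow (q x : ℂ) (k : ℕ) :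
    ‖(-1) ^ k * q ^ k.choose 2 * x ^ k‖ = ‖q‖ ^ k.choose 2 * ‖x‖ ^ k := by
  simp

section Analytic

variable {q : ℂ}

lemma summable_norm_mul_pow (a : ℂ) (hq : ‖q‖ < 1) : Summable fun j : ℕ => ‖a * q ^ j‖ := by
  simpa [norm_mul, norm_pow] using (summable_geometric_of_lt_one (norm_nonneg q) hq).mul_left ‖a‖

lemma hasProd_qPochInf (a : ℂ) (hq : ‖q‖ < 1) :
    HasProd (fun j : ℕ => 1 - a * q ^ j) (qPochInf a q) := by
  have := multipliable_one_add_of_summable (f := fun j : ℕ => -(a * q ^ j))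
    (by simpa using summable_norm_mul_pow a hq)
  simp only [← sub_eq_add_neg] at this
  exact this.hasProd

lemma tendsto_qPoch (a : ℂ) (hq : ‖q‖ < 1) :
    Tendsto (qPoch a q) atTop (𝓝 (qPochInf a q)) :=
  (hasProd_qPochInf a hq).tendsto_prod_nat

lemma qPochInf_ne_zero {a : ℂ} (hq : ‖q‖ < 1) (ha : ∀ j : ℕ, 1 - a * q ^ j ≠ 0) :
    qPochInf a q ≠ 0 := by
  simpa [qPochInf, ← sub_eq_add_neg] using tprod_one_add_ne_zero_of_summable
    (f := fun j : ℕ => -(a * q ^ j)) (by simpa [← sub_eq_add_neg] using ha)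
    (by simpa using summable_norm_mul_pow a hq)

lemma one_sub_mul_pow_self_ne_zero (hq : ‖q‖ < 1) (j : ℕ) : 1 - q * q ^ j ≠ 0 := by
  have h : ‖q * q ^ j‖ < 1 := by
    rw [← pow_succ', norm_pow]
    exact pow_lt_one₀ (norm_nonneg q) hq (Nat.succ_ne_zero j)
  rw [sub_ne_zero]
  rintro h1
  rw [← h1, norm_one] at h
  exact lt_irrefl _ h

lemma qPoch_self_ne_zero (hq : ‖q‖ < 1) (n : ℕ) : qPoch q q n ≠ 0 :=
  prod_ne_zero_iff.mpr fun j _ => one_sub_mul_pow_self_ne_zero hq j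

lemma qPochInf_self_ne_zero (hq : ‖q‖ < 1) : qPochInf q q ≠ 0 :=
  qPochInf_ne_zero hq (one_sub_mul_pow_self_ne_zero hq)

lemma qbinom_add_eq_div (hq : ‖q‖ < 1) (k l : ℕ) :
    qbinom q (k + l) k = qPoch q q (k + l) / (qPoch q q k * qPoch q q l) := by
  rw [eq_div_iff (mul_ne_zero (qPoch_self_ne_zero hq k) (qPoch_self_ne_zero hq l)), ← mul_assoc,
    qbinom_add_mul_qPoch_mul_qPoch]

lemma tendsto_qbinom (hq : ‖q‖ < 1) (k : ℕ) :
    Tendsto (fun m => qbinom q m k) atTop (𝓝 (qPoch q q k)⁻¹) := by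
  have hP := tendsto_qPoch q hq
  have hP0 := qPochInf_self_ne_zero hq
  have hlim := (hP.comp (tendsto_add_atTop_nat k)).div (tendsto_const_nhds.mul hP)
    (mul_ne_zero (qPoch_self_ne_zero hq k) hP0)
  have hval : qPochInf q q / (qPoch q q k * qPochInf q q) = (qPoch q q k)⁻¹ := by
    field_simp
  rw [hval] at hlim
  rw [← tendsto_add_atTop_iff_nat k]
  refine hlim.congr fun l => ?_
  simp only [Pi.div_apply, Function.comp_apply, add_comm l k, qbinom_add_eq_div hq]

lemma exists_norm_qbinom_le (hq : ‖q‖ < 1) : ∃ C, ∀ m k, ‖qbinom q m k‖ ≤ C := by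
  obtain ⟨B, hB⟩ := exists_norm_le_of_tendsto (tendsto_qPoch q hq)
  obtain ⟨D, hD⟩ := exists_norm_le_of_tendsto ((tendsto_qPoch q hq).inv₀ (qPochInf_self_ne_zero hq))
  have hB0 : 0 ≤ B := (norm_nonneg _).trans (hB 0)
  have hD0 : 0 ≤ D := (norm_nonneg _).trans (hD 0)
  refine ⟨B * D * D, fun m k => ?_⟩
  rcases lt_or_ge m k with hmk | hkm
  · rw [qbinom_eq_zero_of_lt q hmk, norm_zero]
    positivity
  · obtain ⟨l, rfl⟩ := Nat.exists_eq_add_of_le hkm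
    rw [qbinom_add_eq_div hq, div_eq_mul_inv, mul_inv, ← mul_assoc, norm_mul, norm_mul]
    gcongr
    exacts [hB _, hD _, hD _]

theorem hasSum_qPochInf (hq : ‖q‖ < 1) (x : ℂ) :
    HasSum (fun k => (qPoch q q k)⁻¹ * ((-1) ^ k * q ^ k.choose 2 * x ^ k)) (qPochInf x q) := by
  obtain ⟨C, hC⟩ := exists_norm_qbinom_le hq
  have hC0 : 0 ≤ C := (norm_nonneg _).trans (hC 0 0)
  have hbound : Summable fun k : ℕ => C * (‖q‖ ^ k.choose 2 * ‖x‖ ^ k) :=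
    (summable_pow_choose_two_mul_pow (norm_nonneg q) hq ‖x‖).mul_left C
  have hlim := tendsto_tsum_of_dominated_convergence hbound
    (fun k => (tendsto_qbinom hq k).mul_const ((-1) ^ k * q ^ k.choose 2 * x ^ k))
    (Eventually.of_forall fun N k => by
      rw [norm_mul, norm_neg_one_pow_mul_pow_choose_two_mul_pow]
      gcongr
      exact hC N k)
  simp only [tsum_qbinom_mul, ← qPoch_eq_sum_qbinom] at hlim
  have hsum : Summable fun k => (qPoch q q k)⁻¹ * ((-1) ^ k * q ^ k.choose 2 * x ^ k) :=
    hbound.of_norm_bounded fun k => by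
      rw [norm_mul, norm_neg_one_pow_mul_pow_choose_two_mul_pow]
      gcongr
      exact le_of_tendsto' (tendsto_qbinom hq k).norm fun m => hC m k
  rw [tendsto_nhds_unique (tendsto_qPoch x hq) hlim]
  exact hsum.hasSum

end Analytic

section TwoVariable

variable {q b z1 z2 : ℂ}

lemma p2D_div_eq_tsum (P : ℂ) (hz1 : z1 ≠ 0) (hz2 : z2 ≠ 0) (m n : ℕ) :
    p2D q b z1 z2 m n / (P * z1 ^ m * z2 ^ n) =
      ∑' k, qbinom q m k * qbinom q n k * qPoch q q k * (qPoch (b * q) q (m + n - k) / P) *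
        ((-1) ^ k * q ^ k.choose 2 * (z1 * z2)⁻¹ ^ k) := by
  rw [tsum_eq_sum (s := range (min m n + 1)) fun k hk => ?_, p2D, sum_div]
  · refine sum_congr rfl fun k hk => ?_
    have hk' := mem_range_succ_iff.mp hk
    rw [← pow_sub_mul_pow z1 (hk'.trans (min_le_left m n)),
      ← pow_sub_mul_pow z2 (hk'.trans (min_le_right m n))]
    simp only [inv_pow, mul_pow]
    field_simp
  · rcases lt_or_ge m k with hmk | hkm
    · rw [qbinom_eq_zero_of_lt q hmk]
      ring
    · rw [qbinom_eq_zero_of_lt q (show n < k by rw [mem_range] at hk; omega)]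
      ring

lemma tendsto_p2D_summand (hq : ‖q‖ < 1) (hP : qPochInf (b * q) q ≠ 0) (c : ℂ) (k : ℕ) :
    Tendsto (fun p : ℕ × ℕ => qbinom q p.1 k * qbinom q p.2 k * qPoch q q k *
      (qPoch (b * q) q (p.1 + p.2 - k) / qPochInf (b * q) q) * c) atTop
      (𝓝 ((qPoch q q k)⁻¹ * c)) := by
  have hfst : Tendsto Prod.fst (atTop : Filter (ℕ × ℕ)) atTop := by
    rw [← prod_atTop_atTop_eq]; exact tendsto_fst
  have hsnd : Tendsto Prod.snd (atTop : Filter (ℕ × ℕ)) atTop := by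
    rw [← prod_atTop_atTop_eq]; exact tendsto_snd
  have hsum : Tendsto (fun p : ℕ × ℕ => p.1 + p.2 - k) atTop atTop :=
    (tendsto_sub_atTop_nat k).comp (hfst.atTop_add_atTop hsnd)
  have hratio := ((tendsto_qPoch (b * q) hq).comp hsum).div_const (qPochInf (b * q) q)
  rw [div_self hP] at hratio
  have hlim := (((((tendsto_qbinom hq k).comp hfst).mul ((tendsto_qbinom hq k).comp hsnd)).mul_const
    (qPoch q q k)).mul hratio).mul_const c
  have hval : (qPoch q q k)⁻¹ * (qPoch q q k)⁻¹ * qPoch q q k * 1 * c = (qPoch q q k)⁻¹ * c := by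
    field_simp [qPoch_self_ne_zero hq k]
  rw [hval] at hlim
  exact hlim

theorem tendsto_p2D_div (hq : ‖q‖ < 1) (hP : qPochInf (b * q) q ≠ 0) (hz1 : z1 ≠ 0)
    (hz2 : z2 ≠ 0) :
    Tendsto (fun p : ℕ × ℕ => p2D q b z1 z2 p.1 p.2 / (qPochInf (b * q) q * z1 ^ p.1 * z2 ^ p.2))
      atTop (𝓝 (qPochInf (z1 * z2)⁻¹ q)) := by
  obtain ⟨C, hC⟩ := exists_norm_qbinom_le hq
  obtain ⟨B, hB⟩ := exists_norm_le_of_tendsto (tendsto_qPoch q hq)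
  obtain ⟨D, hD⟩ := exists_norm_le_of_tendsto
    ((tendsto_qPoch (b * q) hq).div_const (qPochInf (b * q) q))
  have hC0 : 0 ≤ C := (norm_nonneg _).trans (hC 0 0)
  have hB0 : 0 ≤ B := (norm_nonneg _).trans (hB 0)
  have hbound : Summable fun k : ℕ => C * C * B * D * (‖q‖ ^ k.choose 2 * ‖(z1 * z2)⁻¹‖ ^ k) :=
    (summable_pow_choose_two_mul_pow (norm_nonneg q) hq _).mul_left _
  simp only [p2D_div_eq_tsum _ hz1 hz2]
  rw [← (hasSum_qPochInf hq (z1 * z2)⁻¹).tsum_eq]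
  refine tendsto_tsum_of_dominated_convergence hbound (fun k => tendsto_p2D_summand hq hP _ k)
    (Eventually.of_forall fun p k => ?_)
  rw [norm_mul, norm_neg_one_pow_mul_pow_choose_two_mul_pow, norm_mul, norm_mul, norm_mul]
  gcongr
  exacts [hC _ _, hC _ _, hB _, hD _]

end TwoVariable

lemma mul_pow_lt_one_of_lt_one {a r : ℝ} (ha : a < 1) (hr0 : 0 ≤ r) (hr1 : r ≤ 1) (j : ℕ) :
    a * r ^ j < 1 := by
  rcases le_or_gt a 0 with ha0 | ha0
  · exact (mul_nonpos_of_nonpos_of_nonneg ha0 (pow_nonneg hr0 j)).trans_lt one_pos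
  · exact (mul_le_of_le_one_right ha0.le (pow_le_one₀ hr0 hr1)).trans_lt ha

theorem stmt17 (q b : ℝ) (hq0 : 0 < q) (hq1 : q < 1) (hb : b < 1 / q)
    (z1 z2 : ℂ) (hz1 : z1 ≠ 0) (hz2 : z2 ≠ 0) :
    Tendsto
      (fun p : ℕ × ℕ =>
        p2D (q : ℂ) (b : ℂ) z1 z2 p.1 p.2 /
          (qPochInf ((b : ℂ) * (q : ℂ)) (q : ℂ) * z1 ^ p.1 * z2 ^ p.2))
      atTop (nhds (qPochInf (1 / (z1 * z2)) (q : ℂ))) := by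
  have hq : ‖(q : ℂ)‖ < 1 := by rwa [Complex.norm_real, Real.norm_of_nonneg hq0.le]
  have hbq : b * q < 1 := by rwa [lt_div_iff₀ hq0] at hb
  have hP : qPochInf ((b : ℂ) * q) q ≠ 0 := by
    refine qPochInf_ne_zero hq fun j => ?_
    have h := mul_pow_lt_one_of_lt_one hbq hq0.le hq1.le j
    exact_mod_cast (sub_pos.2 h).ne'
  rw [one_div]
  exact tendsto_p2D_div hq hP hz1 hz2
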